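/- arXiv:1605.05713 — 4 statements merged into one kernel-verified Lean document; each statement's English description precedes it below -/
import Mathlib

section
/- Let m ≥ 1 and let W = (w₀, w₁, …, w_{2^m−1}) be a tuple with wᵢ ∈ {1, −1} for all i. Then W = H_{2^m}^{(r)} or W = −H_{2^m}^{(r)} for some r ∈ {0, …, 2^m−1} if and only if for any four pairwise distinct integers j, c, l, v ∈ {0, …, 2^m−1} with z_j ⊕ z_c ⊕ z_l ⊕ z_v = 0 one has w_j·w_c = w_l·w_v. -/
open Finset

/-- Boolean functions on `𝔽₂ⁿ`. -/
abbrev BF (n : ℕ) := (Fin n → ZMod 2) → ZMod 2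

/-- Dot product on `𝔽₂ⁿ`. -/
def bdot {n : ℕ} (u x : Fin n → ZMod 2) : ZMod 2 := ∑ i, u i * x i

/-- Walsh–Hadamard transform of a Boolean function. -/
def walsh {n : ℕ} (g : BF n) (u : Fin n → ZMod 2) : ℤ :=
  ∑ x : Fin n → ZMod 2, (-1 : ℤ) ^ (g x + bdot u x).val

/-- Generalized Walsh–Hadamard transform of `f : 𝔽₂ⁿ → ℤ_q`. -/
noncomputable def gwht {n q : ℕ} (f : (Fin n → ZMod 2) → ZMod q) (u : Fin n → ZMod 2) : ℂ :=
  ∑ x : Fin n → ZMod 2,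
    Complex.exp (2 * Real.pi * Complex.I / (q : ℂ)) ^ (f x).val * (-1 : ℂ) ^ (bdot u x).val

/-- `f : 𝔽₂ⁿ → ℤ_q` is gbent if `|H_f(u)| = 2^{n/2}` for all `u`. -/
def IsGbent {n q : ℕ} (f : (Fin n → ZMod 2) → ZMod q) : Prop :=
  ∀ u, ‖gwht f u‖ = (2 : ℝ) ^ ((n : ℝ) / 2)

/-- A Boolean function (in an even number `n` of variables) is bent
if `|W_g(u)| = 2^{n/2}` for all `u`. -/
def IsBent {n : ℕ} (g : BF n) : Prop := ∀ u, |walsh g u| = 2 ^ (n / 2)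

/-- A Boolean function (in an odd number `n` of variables) is semi-bent if
`W_g(u) ∈ {0, ±2^{(n+1)/2}}` for all `u`. -/
def IsSemiBent {n : ℕ} (g : BF n) : Prop :=
  ∀ u, walsh g u = 0 ∨ walsh g u = 2 ^ ((n + 1) / 2) ∨ walsh g u = -2 ^ ((n + 1) / 2)

/-- `gd` is the dual of the bent function `g`: `W_g(u) = 2^{n/2}(-1)^{gd(u)}`. -/
def IsDual {n : ℕ} (g gd : BF n) : Prop :=
  ∀ u, walsh g u = 2 ^ (n / 2) * (-1 : ℤ) ^ (gd u).val

/-- The `t`-th binary digit of `j`, as an element of `𝔽₂`. -/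
def bit (t j : ℕ) : ZMod 2 := if Nat.testBit j t then 1 else 0

/-- Dot product `z_r · z_j` of the binary representations (of length `m`) of `r` and `j`. -/
def zdot (m r j : ℕ) : ZMod 2 := ∑ t ∈ Finset.range m, bit t r * bit t j

/-- Entry `(r, j)` of the Sylvester–Hadamard matrix `H_{2^m}`, i.e. `(-1)^{z_r · z_j}`. -/
def hadRow (m r j : ℕ) : ℤ := (-1 : ℤ) ^ (zdot m r j).val

/-- `a 0, …, a (k-1)` are the Boolean coordinate functions of `f : 𝔽₂ⁿ → ℤ_{2^k}`:
`f = a₀ + 2a₁ + ⋯ + 2^{k-1}a_{k-1}`. -/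
def coordExpand {n : ℕ} (k : ℕ) (a : ℕ → BF n) (f : (Fin n → ZMod 2) → ZMod (2 ^ k)) : Prop :=
  ∀ x, f x = ∑ j ∈ Finset.range k, (2 : ZMod (2 ^ k)) ^ j * ((a j x).val : ZMod (2 ^ k))

/-- The `i`-th component function `g_i = a_{k-1} ⊕ i₀a₀ ⊕ ⋯ ⊕ i_{k-2}a_{k-2}`. -/
def component {n : ℕ} (k : ℕ) (a : ℕ → BF n) (i : ℕ) : BF n :=
  fun x => a (k - 1) x + ∑ t ∈ Finset.range (k - 1), bit t i * a t x

/-- The affine space `a0 ⊕ ⟨a 0, …, a (m-1)⟩` of Boolean functions. -/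
def affSpan {n : ℕ} (m : ℕ) (a0 : BF n) (a : ℕ → BF n) : Set (BF n) :=
  {g | ∃ c : ℕ → ZMod 2, g = fun x => a0 x + ∑ t ∈ Finset.range m, c t * a t x}

/-- Walsh–Hadamard transform for Boolean functions on `𝔽₂ⁿ × 𝔽₂^m`. -/
def walshP {n m : ℕ} (F : (Fin n → ZMod 2) → (Fin m → ZMod 2) → ZMod 2)
    (u : Fin n → ZMod 2) (v : Fin m → ZMod 2) : ℤ :=
  ∑ x : Fin n → ZMod 2, ∑ y : Fin m → ZMod 2, (-1 : ℤ) ^ (F x y + bdot u x + bdot v y).val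

/-! With `g j = w₀ w_j`, the quadruple condition applied to `(a, b, a ⊕ b, 0)` says that `g` is a
character of `({0, …, 2^m - 1}, ⊕) ≅ 𝔽₂^m`, and so is every row of `H_{2^m}`. A character is
determined by its values `±1` at the unit vectors `2^t`, and these values are the bits of the
index `r` of the row `H_{2^m}^{(r)}` that they single out; then `w = w₀ H_{2^m}^{(r)}`. -/
lemma neg_one_pow_val_add (x y : ZMod 2) :
    (-1 : ℤ) ^ (x + y).val = (-1) ^ x.val * (-1) ^ y.val := by
  rw [ZMod.val_add, ← neg_one_pow_eq_pow_mod_two, pow_add]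

lemma bit_xor (t j c : ℕ) : bit t (j ^^^ c) = bit t j + bit t c := by
  unfold bit
  rw [Nat.testBit_xor]
  cases j.testBit t <;> cases c.testBit t <;> decide

lemma zdot_xor (m r j c : ℕ) : zdot m r (j ^^^ c) = zdot m r j + zdot m r c := by
  simp only [zdot, bit_xor, mul_add, Finset.sum_add_distrib]

lemma hadRow_xor (m r j c : ℕ) : hadRow m r (j ^^^ c) = hadRow m r j * hadRow m r c := by
  rw [hadRow, zdot_xor, neg_one_pow_val_add, hadRow, hadRow]

lemma hadRow_zero (m r : ℕ) : hadRow m r 0 = 1 := by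
  simp [hadRow, zdot, bit]

lemma hadRow_two_pow {m t : ℕ} (r : ℕ) (ht : t < m) :
    hadRow m r (2 ^ t) = if r.testBit t then -1 else 1 := by
  rw [hadRow, zdot, Finset.sum_eq_single_of_mem t (Finset.mem_range.mpr ht)]
  · simp only [bit, Nat.testBit_two_pow_self]
    split <;> rfl
  · intro s _ hst
    simp [bit, Nat.testBit_two_pow_of_ne (Ne.symm hst)]

lemma hadRow_mul_eq_of_xor_eq_zero {m r j c l v : ℕ} (h : j ^^^ c ^^^ l ^^^ v = 0) :
    hadRow m r j * hadRow m r c = hadRow m r l * hadRow m r v := by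
  have hjc : j ^^^ c = l ^^^ v := by
    rwa [Nat.xor_assoc, xor_eq_zero_iff] at h
  rw [← hadRow_xor, ← hadRow_xor, hjc]

lemma exists_lt_two_pow_testBit_eq (m : ℕ) (p : ℕ → Bool) :
    ∃ r < 2 ^ m, ∀ t < m, r.testBit t = p t := by
  refine ⟨∑ t ∈ (Finset.range m).filter (p ·), 2 ^ t,
    Nat.geomSum_lt le_rfl (by simp +contextual), fun t ht => ?_⟩
  rw [Bool.eq_iff_iff, ← Nat.mem_bitIndices, ← List.mem_toFinset,
    Finset.toFinset_bitIndices_sum_two_pow]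
  simp [ht]

lemma lt_two_pow_or_xor_two_pow_lt {j m : ℕ} (hj : j < 2 ^ (m + 1)) :
    j < 2 ^ m ∨ j ^^^ 2 ^ m < 2 ^ m := by
  have high : ∀ i > m, j.testBit i = false := fun i hi =>
    Nat.testBit_lt_two_pow (hj.trans_le (Nat.pow_le_pow_right two_pos hi))
  cases hjm : j.testBit m
  · left
    refine Nat.lt_pow_two_of_testBit j fun i hi => ?_
    rcases hi.eq_or_lt with rfl | hi
    exacts [hjm, high i hi]
  · right
    refine Nat.lt_pow_two_of_testBit _ fun i hi => ?_
    rcases hi.eq_or_lt with rfl | hi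
    · simp [Nat.testBit_xor, hjm]
    · simp [Nat.testBit_xor, high i hi, hi.ne]

section IsXorMul

variable {M : Type*} [Mul M]

def IsXorMul (m : ℕ) (f : ℕ → M) : Prop :=
  ∀ a < 2 ^ m, ∀ b < 2 ^ m, f (a ^^^ b) = f a * f b

lemma IsXorMul.mono {m k : ℕ} {f : ℕ → M} (hf : IsXorMul m f) (hkm : k ≤ m) :
    IsXorMul k f := fun a ha b hb =>
  have hpow : 2 ^ k ≤ 2 ^ m := Nat.pow_le_pow_right two_pos hkm
  hf a (ha.trans_le hpow) b (hb.trans_le hpow)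

lemma IsXorMul.eqOn_of_eq_two_pow {m : ℕ} {f g : ℕ → M} (hf : IsXorMul m f) (hg : IsXorMul m g)
    (h0 : f 0 = g 0) (h2 : ∀ t < m, f (2 ^ t) = g (2 ^ t)) :
    ∀ j < 2 ^ m, f j = g j := by
  induction m with
  | zero =>
    intro j hj
    rw [Nat.lt_one_iff.mp hj, h0]
  | succ m ih =>
    have ih := ih (hf.mono m.le_succ) (hg.mono m.le_succ) fun t ht => h2 t (ht.trans m.lt_succ_self)
    have hm : 2 ^ m < 2 ^ (m + 1) := Nat.pow_lt_pow_succ one_lt_two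
    intro j hj
    rcases lt_two_pow_or_xor_two_pow_lt hj with hj' | hc
    · exact ih j hj'
    · rw [← Nat.xor_xor_cancel_right j (2 ^ m), hf _ (hc.trans hm) _ hm,
        hg _ (hc.trans hm) _ hm, ih _ hc, h2 m m.lt_succ_self]

end IsXorMul

lemma isXorMul_hadRow (m r : ℕ) : IsXorMul m (hadRow m r) :=
  fun a _ b _ => hadRow_xor m r a b

lemma isXorMul_of_quadruple {m : ℕ} {w : ℕ → ℤ} (hsq : ∀ i < 2 ^ m, w i * w i = 1)
    (H : ∀ j < 2 ^ m, ∀ c < 2 ^ m, ∀ l < 2 ^ m, ∀ v < 2 ^ m,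
      j ≠ c → j ≠ l → j ≠ v → c ≠ l → c ≠ v → l ≠ v →
      j ^^^ c ^^^ l ^^^ v = 0 → w j * w c = w l * w v) :
    IsXorMul m (fun j => w 0 * w j) := by
  intro a ha b hb
  have h0 : w 0 * w 0 = 1 := hsq 0 (Nat.two_pow_pos m)
  -- the quadruple `(a, b, a ⊕ b, 0)`, whose degenerate cases hold since `w i ^ 2 = 1`
  have key : w a * w b = w (a ^^^ b) * w 0 := by
    rcases eq_or_ne a b with rfl | hab
    · rw [Nat.xor_self, hsq a ha, h0]
    rcases eq_or_ne a 0 with rfl | ha0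
    · rw [Nat.zero_xor, mul_comm]
    rcases eq_or_ne b 0 with rfl | hb0
    · rw [Nat.xor_zero]
    exact H a ha b hb _ (Nat.xor_lt_two_pow ha hb) 0 (Nat.two_pow_pos m) hab
      (fun h => hb0 (xor_left_eq_self_iff.mp h.symm)) ha0
      (fun h => ha0 (xor_right_eq_self_iff.mp h.symm)) hb0 (by simpa using hab) (by simp)
  linear_combination (-(w 0 * w 0)) * key - w 0 * w (a ^^^ b) * h0

theorem hadamard_row_iff_quadruple_condition_general (m : ℕ) (w : ℕ → ℤ)
    (hw : ∀ i < 2 ^ m, w i = 1 ∨ w i = -1) :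
    (∃ r < 2 ^ m, (∀ i < 2 ^ m, w i = hadRow m r i) ∨ (∀ i < 2 ^ m, w i = -hadRow m r i)) ↔
      (∀ j < 2 ^ m, ∀ c < 2 ^ m, ∀ l < 2 ^ m, ∀ v < 2 ^ m,
        j ≠ c → j ≠ l → j ≠ v → c ≠ l → c ≠ v → l ≠ v →
        j ^^^ c ^^^ l ^^^ v = 0 → w j * w c = w l * w v) := by
  constructor
  · rintro ⟨r, -, hrow | hrow⟩ j hj c hc l hl v hv - - - - - - hxor
    · rw [hrow j hj, hrow c hc, hrow l hl, hrow v hv]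
      exact hadRow_mul_eq_of_xor_eq_zero hxor
    · rw [hrow j hj, hrow c hc, hrow l hl, hrow v hv, neg_mul_neg, neg_mul_neg]
      exact hadRow_mul_eq_of_xor_eq_zero hxor
  · intro H
    have hsq : ∀ i < 2 ^ m, w i * w i = 1 := fun i hi => mul_self_eq_one_iff.mpr (hw i hi)
    obtain ⟨r, hr, hbits⟩ :=
      exists_lt_two_pow_testBit_eq m fun t => decide (w 0 * w (2 ^ t) = -1)
    have hrow : ∀ j < 2 ^ m, w 0 * w j = hadRow m r j := by
      refine (isXorMul_of_quadruple hsq H).eqOn_of_eq_two_pow (isXorMul_hadRow m r) ?_ ?_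
      · rw [hsq 0 (Nat.two_pow_pos m), hadRow_zero]
      · intro t ht
        rw [hadRow_two_pow r ht, hbits t ht]
        have hsq2 : w 0 * w (2 ^ t) * (w 0 * w (2 ^ t)) = 1 := by
          rw [mul_mul_mul_comm, hsq 0 (Nat.two_pow_pos m),
            hsq _ (Nat.pow_lt_pow_right one_lt_two ht), one_mul]
        rcases mul_self_eq_one_iff.mp hsq2 with h | h <;> simp [h]
    refine ⟨r, hr, ?_⟩
    rcases hw 0 (Nat.two_pow_pos m) with h0 | h0
    · exact Or.inl fun i hi => by rw [← hrow i hi, h0, one_mul]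
    · exact Or.inr fun i hi => by rw [← hrow i hi, h0, neg_one_mul, neg_neg]

/-- Lemma 1(iii): a `±1`-tuple of length `2^m` is (±) a row of the Sylvester–Hadamard matrix
iff for all pairwise distinct `j, c, l, v` with `z_j ⊕ z_c ⊕ z_l ⊕ z_v = 0` one has
`w_j w_c = w_l w_v`. -/
theorem hadamard_row_iff_quadruple_condition (m : ℕ) (hm : 1 ≤ m) (w : ℕ → ℤ)
    (hw : ∀ i < 2 ^ m, w i = 1 ∨ w i = -1) :
    (∃ r < 2 ^ m, (∀ i < 2 ^ m, w i = hadRow m r i) ∨ (∀ i < 2 ^ m, w i = -hadRow m r i)) ↔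
      (∀ j < 2 ^ m, ∀ c < 2 ^ m, ∀ l < 2 ^ m, ∀ v < 2 ^ m,
        j ≠ c → j ≠ l → j ≠ v → c ≠ l → c ≠ v → l ≠ v →
        j ^^^ c ^^^ l ^^^ v = 0 → w j * w c = w l * w v) :=
  hadamard_row_iff_quadruple_condition_general m w hw
end

section
/- Let k ≥ 2 and f : 𝔽₂ⁿ → ℤ_{2^k}, with coordinate functions a₀,…,a_{k−1} and component functions g₀,…,g_{2^{k−1}−1}. For every u ∈ 𝔽₂ⁿ, 2^{k−1} · H_f(u) = ∑_{t=0}^{2^{k−1}−1} S_t ζ^t, where S_t = ∑_{j=0}^{2^{k−1}−1} (−1)^{z_t·z_j} W_{g_j}(u) and ζ = exp(2πi/2^k). -/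
open Finset

/-!
Fix `x`, put `m = k - 1`, let `v ∈ 𝔽₂^m` be `(a₀(x), …, a_{m-1}(x))` and let `r < 2^m` be the
integer with binary digits `v`. Since `g_j(x) = a_m(x) ⊕ z_j · v`, orthogonality of the rows of the
Sylvester–Hadamard matrix gives `∑_j (-1)^{z_t·z_j} (-1)^{g_j(x)} = 2^m (-1)^{a_m(x)} [z_t = v]`,
so `S_t = 2^m ∑_{x : v(x) = z_t} (-1)^{a_m(x) ⊕ u·x}`. Summing against `ζ^t` picks out `t = r`, and
`ζ^{f(x)} = ζ^{r + 2^m a_m(x)} = (-1)^{a_m(x)} ζ^r` because `ζ^{2^m} = -1`.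
-/

lemma neg_one_pow_val_add_s2 {R : Type*} [Ring R] (a b : ZMod 2) :
    (-1 : R) ^ (a + b).val = (-1) ^ a.val * (-1) ^ b.val := by
  rw [ZMod.val_add, ← neg_one_pow_eq_pow_mod_two, pow_add]

section CommRing

variable {R : Type*} [CommRing R]

lemma neg_one_pow_val_sum {ι : Type*} (s : Finset ι) (c : ι → ZMod 2) :
    (-1 : R) ^ (∑ i ∈ s, c i).val = ∏ i ∈ s, (-1 : R) ^ (c i).val := by
  induction s using Finset.cons_induction with
  | empty => simp
  | cons i s hi ih => rw [sum_cons, neg_one_pow_val_add_s2, ih, prod_cons]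

lemma sum_neg_one_pow_val_mul (c : ZMod 2) :
    ∑ b : ZMod 2, (-1 : R) ^ (c * b).val = if c = 0 then 2 else 0 := by
  rw [show (univ : Finset (ZMod 2)) = {0, 1} by decide, sum_pair zero_ne_one]
  obtain rfl | rfl : c = 0 ∨ c = 1 := by revert c; decide
  all_goals simp [one_add_one_eq_two, ZMod.val_one]

lemma sum_neg_one_pow_bdot {n : ℕ} (v : Fin n → ZMod 2) :
    ∑ y : Fin n → ZMod 2, (-1 : R) ^ (bdot v y).val = if v = 0 then 2 ^ n else 0 := by
  simp only [bdot, neg_one_pow_val_sum]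
  rw [← Fintype.prod_sum (fun i b => (-1 : R) ^ (v i * b).val)]
  simp only [sum_neg_one_pow_val_mul, Fintype.prod_ite_zero, prod_const, card_univ,
    Fintype.card_fin, funext_iff, Pi.zero_apply]

end CommRing

lemma IsPrimitiveRoot.pow_eq_neg_one_of_two_mul {R : Type*} [CommRing R] [NoZeroDivisors R]
    {ζ : R} {n : ℕ} (h : IsPrimitiveRoot ζ (2 * n)) (hn : n ≠ 0) : ζ ^ n = -1 := by
  have h2 := h.pow_of_dvd hn (dvd_mul_left n 2)
  rw [Nat.mul_div_cancel _ (Nat.pos_of_ne_zero hn)] at h2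
  exact h2.eq_neg_one_of_two_right

lemma bdot_comm {n : ℕ} (x y : Fin n → ZMod 2) : bdot x y = bdot y x := by
  simp only [bdot, mul_comm]

lemma bdot_add_left {n : ℕ} (x x' y : Fin n → ZMod 2) :
    bdot (x + x') y = bdot x y + bdot x' y := by
  simp only [bdot, Pi.add_apply, add_mul, sum_add_distrib]

section Binary

def bits (m j : ℕ) : Fin m → ZMod 2 := fun s => bit s j

/-- `finFunctionFinEquiv` applies because `ZMod 2` is definitionally `Fin 2`. -/
def binaryEquiv (m : ℕ) : (Fin m → ZMod 2) ≃ Fin (2 ^ m) := finFunctionFinEquiv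

lemma binaryEquiv_apply {m : ℕ} (y : Fin m → ZMod 2) :
    (binaryEquiv m y : ℕ) = ∑ s, (y s).val * 2 ^ (s : ℕ) := rfl

lemma binaryEquiv_symm_apply {m : ℕ} (t : Fin (2 ^ m)) (s : Fin m) :
    (binaryEquiv m).symm t s = ((t / 2 ^ (s : ℕ) % 2 : ℕ) : ZMod 2) :=
  ZMod.val_injective _ <| by
    rw [ZMod.val_natCast, Nat.mod_mod]
    exact finFunctionFinEquiv_symm_apply_val t s

lemma bit_eq_natCast (t j : ℕ) : bit t j = ((j / 2 ^ t % 2 : ℕ) : ZMod 2) := by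
  rcases Nat.mod_two_eq_zero_or_one (j / 2 ^ t) with h | h <;>
    simp [bit, Nat.testBit_eq_decide_div_mod_eq, h]

lemma bits_binaryEquiv {m : ℕ} (y : Fin m → ZMod 2) : bits m (binaryEquiv m y) = y := by
  funext s
  rw [bits, bit_eq_natCast, ← binaryEquiv_symm_apply, Equiv.symm_apply_apply]

lemma sum_range_two_pow {M : Type*} [AddCommMonoid M] (m : ℕ) (F : ℕ → M) :
    ∑ t ∈ range (2 ^ m), F t = ∑ y : Fin m → ZMod 2, F (binaryEquiv m y) := by
  rw [← Fin.sum_univ_eq_sum_range]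
  exact (Equiv.sum_comp (binaryEquiv m) (fun t => F t)).symm

lemma sum_range_two_pow_bits {M : Type*} [AddCommMonoid M] (m : ℕ)
    (F : (Fin m → ZMod 2) → M) :
    ∑ j ∈ range (2 ^ m), F (bits m j) = ∑ y, F y := by
  simp only [sum_range_two_pow, bits_binaryEquiv]

lemma zdot_eq_bdot (m t j : ℕ) : zdot m t j = bdot (bits m t) (bits m j) :=
  sum_range fun s => bit s t * bit s j

lemma component_succ_apply {n : ℕ} (m : ℕ) (a : ℕ → BF n) (j : ℕ) (x : Fin n → ZMod 2) :
    component (m + 1) a j x = a m x + bdot (bits m j) (fun s => a s x) := by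
  simp only [component, Nat.add_sub_cancel, bdot, bits, sum_range fun s => bit s j * a s x]

lemma coordExpand.val_eq_binaryEquiv_add {n m : ℕ} {a : ℕ → BF n}
    {f : (Fin n → ZMod 2) → ZMod (2 ^ (m + 1))} (hf : coordExpand (m + 1) a f)
    (x : Fin n → ZMod 2) :
    (f x).val = binaryEquiv m (fun s => a s x) + (a m x).val * 2 ^ m := by
  have hfx : f x = ((binaryEquiv (m + 1) (fun s => a s x) : ℕ) : ZMod (2 ^ (m + 1))) := by
    rw [hf x, binaryEquiv_apply, ← sum_range fun s => (a s x).val * 2 ^ s]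
    push_cast
    exact sum_congr rfl fun j _ => mul_comm _ _
  rw [hfx, ZMod.val_natCast_of_lt (Fin.is_lt _), binaryEquiv_apply, binaryEquiv_apply,
    Fin.sum_univ_castSucc]
  simp only [Fin.val_castSucc, Fin.val_last]

end Binary

lemma sum_hadRow_mul_neg_one_pow_bdot (m t : ℕ) (v : Fin m → ZMod 2) :
    ∑ j ∈ range (2 ^ m), hadRow m t j * (-1 : ℤ) ^ (bdot (bits m j) v).val
      = if bits m t = v then 2 ^ m else 0 := by
  have hrow (j : ℕ) : hadRow m t j * (-1 : ℤ) ^ (bdot (bits m j) v).val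
      = (-1) ^ (bdot (bits m t + v) (bits m j)).val := by
    rw [hadRow, zdot_eq_bdot, bdot_comm (bits m j), ← neg_one_pow_val_add_s2, bdot_add_left]
  simp only [hrow, sum_range_two_pow_bits m (fun y => (-1 : ℤ) ^ (bdot (bits m t + v) y).val),
    sum_neg_one_pow_bdot, funext_iff, Pi.add_apply, Pi.zero_apply, CharTwo.add_eq_zero]

lemma sum_hadRow_mul_walsh_component {n : ℕ} (m : ℕ) (a : ℕ → BF n) (t : ℕ)
    (u : Fin n → ZMod 2) :
    ∑ j ∈ range (2 ^ m), hadRow m t j * walsh (component (m + 1) a j) u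
      = 2 ^ m * ∑ x, if bits m t = (fun s : Fin m => a s x)
          then (-1 : ℤ) ^ (a m x + bdot u x).val else 0 := by
  simp only [walsh, mul_sum]
  rw [sum_comm]
  refine sum_congr rfl fun x _ => ?_
  simp only [component_succ_apply, add_right_comm _ (bdot (bits m _) _), neg_one_pow_val_add_s2
    (a m x + bdot u x), mul_left_comm _ ((-1 : ℤ) ^ (a m x + bdot u x).val), ← mul_sum,
    sum_hadRow_mul_neg_one_pow_bdot]
  split_ifs <;> ring

/-- Proposition 1: `2^{k-1} H_f(u) = ∑_t S_t ζ^t`, where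
`S_t = ∑_j (-1)^{z_t · z_j} W_{g_j}(u)`. -/
theorem gwht_eq_sum_S (n k : ℕ) (hk : 2 ≤ k) (a : ℕ → BF n)
    (f : (Fin n → ZMod 2) → ZMod (2 ^ k)) (hf : coordExpand k a f) (u : Fin n → ZMod 2) :
    (2 ^ (k - 1) : ℂ) * gwht f u =
      ∑ t ∈ Finset.range (2 ^ (k - 1)),
        ((∑ j ∈ Finset.range (2 ^ (k - 1)), hadRow (k - 1) t j * walsh (component k a j) u : ℤ) : ℂ) *
          Complex.exp (2 * Real.pi * Complex.I / ((2 ^ k : ℕ) : ℂ)) ^ t := by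
  obtain ⟨m, rfl⟩ : ∃ m, k = m + 1 := ⟨k - 1, by omega⟩
  rw [gwht]
  set ζ := Complex.exp (2 * Real.pi * Complex.I / ((2 ^ (m + 1) : ℕ) : ℂ))
  have hζ : ζ ^ 2 ^ m = -1 := by
    have hprim : IsPrimitiveRoot ζ (2 * 2 ^ m) := by
      rw [← pow_succ']
      exact Complex.isPrimitiveRoot_exp _ (by positivity)
    exact hprim.pow_eq_neg_one_of_two_mul (by positivity)
  simp only [Nat.add_sub_cancel, sum_hadRow_mul_walsh_component]
  rw [sum_range_two_pow m]
  simp only [bits_binaryEquiv]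
  push_cast
  simp only [mul_sum, sum_mul, ite_mul, zero_mul, mul_ite, mul_zero]
  rw [sum_comm]
  simp only [Fintype.sum_ite_eq']
  refine sum_congr rfl fun x _ => ?_
  rw [hf.val_eq_binaryEquiv_add, pow_add, pow_mul', hζ, neg_one_pow_val_add_s2]
  ring
end

section
/- Let n be even and let g₀, g₁, g₂, g₃ : 𝔽₂ⁿ → 𝔽₂ be bent functions with g₀ ⊕ g₁ ⊕ g₂ ⊕ g₃ = 0. Then the function g₀g₁ ⊕ g₀g₂ ⊕ g₁g₂ is bent if and only if g₀* ⊕ g₁* ⊕ g₂* ⊕ g₃* = 0, and in that case its dual is g₀*g₁* ⊕ g₀*g₂* ⊕ g₁*g₂*. -/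
open Finset

/-! The sign of the majority function of three bits is an affine combination of the
signs of the bits and of their sum: `2·(-1)^{ab⊕ac⊕bc} = (-1)^a + (-1)^b + (-1)^c - (-1)^{a⊕b⊕c}`.
Since `g₃ = g₀ ⊕ g₁ ⊕ g₂`, summing this over `𝔽₂ⁿ` (twisted by `u·x`) gives
`2 W_f = W_{g₀} + W_{g₁} + W_{g₂} - W_{g₃} = 2^{n/2} ((-1)^{g₀*} + (-1)^{g₁*} + (-1)^{g₂*} - (-1)^{g₃*})`,
and the bracket has absolute value `2` exactly when `g₀* ⊕ g₁* ⊕ g₂* ⊕ g₃* = 0`, in which case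
it equals `2·(-1)^{maj(g₀*, g₁*, g₂*)}` by the same identity. -/

lemma two_mul_neg_one_pow_maj_add (a b c e : ZMod 2) :
    2 * (-1 : ℤ) ^ (a * b + a * c + b * c + e).val =
      (-1 : ℤ) ^ (a + e).val + (-1) ^ (b + e).val + (-1) ^ (c + e).val
        - (-1) ^ (a + b + c + e).val := by
  revert a b c e; decide

lemma two_mul_neg_one_pow_maj (a b c : ZMod 2) :
    2 * (-1 : ℤ) ^ (a * b + a * c + b * c).val =
      (-1 : ℤ) ^ a.val + (-1) ^ b.val + (-1) ^ c.val - (-1) ^ (a + b + c).val := by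
  simpa using two_mul_neg_one_pow_maj_add a b c 0

lemma add_eq_zero_of_abs_neg_one_pow_combination_eq_two (a b c d : ZMod 2)
    (h : |(-1 : ℤ) ^ a.val + (-1) ^ b.val + (-1) ^ c.val - (-1) ^ d.val| = 2) :
    a + b + c + d = 0 := by
  revert a b c d; decide

lemma eq_add_add_of_add_eq_zero {a b c d : ZMod 2} (h : a + b + c + d = 0) : d = a + b + c := by
  revert a b c d; decide

lemma IsDual.isBent {n : ℕ} {g gd : BF n} (h : IsDual g gd) : IsBent g := by
  intro u
  rw [h u, abs_mul, abs_of_pos (by positivity)]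
  simp

lemma two_mul_walsh_maj {n : ℕ} (g₀ g₁ g₂ g₃ : BF n)
    (hsum : ∀ x, g₀ x + g₁ x + g₂ x + g₃ x = 0) (u : Fin n → ZMod 2) :
    2 * walsh (fun x => g₀ x * g₁ x + g₀ x * g₂ x + g₁ x * g₂ x) u =
      walsh g₀ u + walsh g₁ u + walsh g₂ u - walsh g₃ u := by
  simp only [walsh, mul_sum, ← sum_add_distrib, ← sum_sub_distrib]
  refine sum_congr rfl fun x _ => ?_
  rw [eq_add_add_of_add_eq_zero (hsum x)]
  exact two_mul_neg_one_pow_maj_add _ _ _ _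

theorem bent_quadruple_secondary_construction_general (n : ℕ) (g₀ g₁ g₂ g₃ : BF n)
    (hsum : ∀ x, g₀ x + g₁ x + g₂ x + g₃ x = 0)
    (d₀ d₁ d₂ d₃ : BF n)
    (hd₀ : IsDual g₀ d₀) (hd₁ : IsDual g₁ d₁) (hd₂ : IsDual g₂ d₂) (hd₃ : IsDual g₃ d₃) :
    (IsBent (fun x => g₀ x * g₁ x + g₀ x * g₂ x + g₁ x * g₂ x) ↔
        ∀ u, d₀ u + d₁ u + d₂ u + d₃ u = 0) ∧
      ((∀ u, d₀ u + d₁ u + d₂ u + d₃ u = 0) →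
        IsDual (fun x => g₀ x * g₁ x + g₀ x * g₂ x + g₁ x * g₂ x)
          (fun u => d₀ u * d₁ u + d₀ u * d₂ u + d₁ u * d₂ u)) := by
  set f : BF n := fun x => g₀ x * g₁ x + g₀ x * g₂ x + g₁ x * g₂ x
  have hW : ∀ u, 2 * walsh f u = 2 ^ (n / 2) * ((-1 : ℤ) ^ (d₀ u).val + (-1) ^ (d₁ u).val
      + (-1) ^ (d₂ u).val - (-1) ^ (d₃ u).val) := fun u => by
    rw [two_mul_walsh_maj g₀ g₁ g₂ g₃ hsum u, hd₀ u, hd₁ u, hd₂ u, hd₃ u]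
    ring
  have hdual (hds : ∀ u, d₀ u + d₁ u + d₂ u + d₃ u = 0) :
      IsDual f (fun u => d₀ u * d₁ u + d₀ u * d₂ u + d₁ u * d₂ u) := fun u => by
    have h := hW u
    rw [eq_add_add_of_add_eq_zero (hds u), ← two_mul_neg_one_pow_maj] at h
    linarith
  refine ⟨⟨fun hbent u => ?_, fun hds => (hdual hds).isBent⟩, hdual⟩
  have hpos : (0 : ℤ) < 2 ^ (n / 2) := by positivity
  have habs := congrArg abs (hW u)
  rw [abs_mul, abs_mul, abs_two, hbent u, abs_of_pos hpos, mul_comm] at habs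
  exact add_eq_zero_of_abs_neg_one_pow_combination_eq_two _ _ _ _
    (mul_left_cancel₀ hpos.ne' habs).symm

/-- Proposition 3 (Carlet/Mesnager): for bent `g₀, g₁, g₂, g₃` with `g₀ ⊕ g₁ ⊕ g₂ ⊕ g₃ = 0`,
the function `g₀g₁ ⊕ g₀g₂ ⊕ g₁g₂` is bent iff `g₀* ⊕ g₁* ⊕ g₂* ⊕ g₃* = 0`, and in that case
its dual is `g₀*g₁* ⊕ g₀*g₂* ⊕ g₁*g₂*`. -/
theorem bent_quadruple_secondary_construction (n : ℕ) (hn : Even n) (g₀ g₁ g₂ g₃ : BF n)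
    (hb₀ : IsBent g₀) (hb₁ : IsBent g₁) (hb₂ : IsBent g₂) (hb₃ : IsBent g₃)
    (hsum : ∀ x, g₀ x + g₁ x + g₂ x + g₃ x = 0)
    (d₀ d₁ d₂ d₃ : BF n)
    (hd₀ : IsDual g₀ d₀) (hd₁ : IsDual g₁ d₁) (hd₂ : IsDual g₂ d₂) (hd₃ : IsDual g₃ d₃) :
    (IsBent (fun x => g₀ x * g₁ x + g₀ x * g₂ x + g₁ x * g₂ x) ↔
        ∀ u, d₀ u + d₁ u + d₂ u + d₃ u = 0) ∧
      ((∀ u, d₀ u + d₁ u + d₂ u + d₃ u = 0) →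
        IsDual (fun x => g₀ x * g₁ x + g₀ x * g₂ x + g₁ x * g₂ x)
          (fun u => d₀ u * d₁ u + d₀ u * d₂ u + d₁ u * d₂ u)) :=
  bent_quadruple_secondary_construction_general n g₀ g₁ g₂ g₃ hsum d₀ d₁ d₂ d₃ hd₀ hd₁ hd₂ hd₃
end

section
/- Let n be even, k ≥ 1, and f : 𝔽₂ⁿ → ℤ_{2^k} with coordinate functions a₀,…,a_{k−1}. Then f is ℤ_{2^k}-bent if and only if for every t = 0, 1, …, k−1 the function f_t : 𝔽₂ⁿ → ℤ_{2^{k−t}} given by f_t(x) = a₀(x) + 2a₁(x) + ⋯ + 2^{k−t−1}a_{k−t−1}(x) is gbent (with respect to q = 2^{k−t}). -/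
open Finset

/-- `f : 𝔽₂ⁿ → ℤ_{2^k}` is `ℤ_{2^k}`-bent if `|∑_x ζ^{a f(x)} (-1)^{u·x}| = 2^{n/2}` for all
`u` and all nonzero `a ∈ ℤ_{2^k}`. -/
def IsZqBent {n k : ℕ} (f : (Fin n → ZMod 2) → ZMod (2 ^ k)) : Prop :=
  ∀ a : ZMod (2 ^ k), a ≠ 0 → IsGbent fun x => a * f x

/-!
Since `ζ_{2^k}^{2^t c} = ζ_{2^{k-t}}^{c mod 2^{k-t}}`, the transform of `2^t f` is that of the
truncation `f_t`, so `f` being bent at the multiplier `2^t` is `f_t` being gbent; a general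
multiplier `2^t b` with `b` odd reduces in the same way to `b f_t`. Gbentness is invariant under
multiplication by a unit `b` of `ℤ_q`: `H_g(u) · conj H_g(u) - 2^n` is the value at `ζ_q` of an
integer polynomial whose value at `ζ_q^b` is the same quantity for `b g`, and `ζ_q^b` is a root of
the minimal polynomial of `ζ_q`.
-/

open Polynomial

noncomputable def zeta (q : ℕ) : ℂ := Complex.exp (2 * Real.pi * Complex.I / q)

theorem isPrimitiveRoot_zeta {q : ℕ} (hq : q ≠ 0) : IsPrimitiveRoot (zeta q) q :=
  Complex.isPrimitiveRoot_exp q hq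

theorem zeta_pow_of_mul_eq {d e q : ℕ} (hq : d * e = q) (hd : d ≠ 0) : zeta q ^ d = zeta e := by
  subst hq
  rcases eq_or_ne e 0 with rfl | _
  · simp [zeta]
  rw [zeta, zeta, ← Complex.exp_nat_mul]
  congr 1
  push_cast
  field_simp

theorem zeta_pow_val_eq {q : ℕ} [NeZero q] {c : ZMod q} {m : ℕ} (h : (m : ZMod q) = c) :
    zeta q ^ c.val = zeta q ^ m := by
  rw [← h, ZMod.val_natCast]
  nth_rw 2 [(isPrimitiveRoot_zeta (NeZero.ne q)).eq_orderOf]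
  exact pow_mod_orderOf _ _

theorem gwht_eq_sum_zeta {n q : ℕ} (f : (Fin n → ZMod 2) → ZMod q) (u : Fin n → ZMod 2) :
    gwht f u = ∑ x, zeta q ^ (f x).val * (-1 : ℂ) ^ (bdot u x).val :=
  rfl

theorem conj_zeta_pow_val {q : ℕ} [NeZero q] (c : ZMod q) :
    starRingEnd ℂ (zeta q ^ c.val) = zeta q ^ (-c).val := by
  have hnorm : ‖zeta q ^ c.val‖ = 1 := by
    rw [norm_pow, (isPrimitiveRoot_zeta (NeZero.ne q)).norm'_eq_one (NeZero.ne q), one_pow]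
  have hinv : zeta q ^ c.val * zeta q ^ (-c).val = 1 := by
    rw [← pow_add, ← zeta_pow_val_eq (c := 0) (by push_cast; simp), ZMod.val_zero, pow_zero]
  rw [← Complex.inv_eq_conj hnorm, inv_eq_of_mul_eq_one_right hinv]

theorem conj_gwht {n q : ℕ} [NeZero q] (g : (Fin n → ZMod 2) → ZMod q) (u : Fin n → ZMod 2) :
    starRingEnd ℂ (gwht g u) = gwht (fun x => -g x) u := by
  simp [gwht_eq_sum_zeta, conj_zeta_pow_val]

theorem isGbent_iff_gwht_mul_gwht_neg {n q : ℕ} [NeZero q] (g : (Fin n → ZMod 2) → ZMod q) :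
    IsGbent g ↔ ∀ u, gwht g u * gwht (fun x => -g x) u = 2 ^ n := by
  have hsq : ((2 : ℝ) ^ ((n : ℝ) / 2)) ^ 2 = 2 ^ n := by
    rw [← Real.rpow_natCast _ 2, ← Real.rpow_mul zero_le_two]
    norm_num
  refine forall_congr' fun u => ?_
  rw [← conj_gwht, Complex.mul_conj, Complex.normSq_eq_norm_sq,
    ← pow_left_inj₀ (norm_nonneg _) (by positivity) two_ne_zero, hsq]
  exact_mod_cast Iff.rfl

theorem IsPrimitiveRoot.aeval_pow_eq_zero_of_coprime {K : Type*} [CommRing K] [IsDomain K]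
    [CharZero K] {μ : K} {q : ℕ} (h : IsPrimitiveRoot μ q) (hq : 0 < q) {p : ℤ[X]}
    (hp : aeval μ p = 0) {b : ℕ} (hb : b.Coprime q) : aeval (μ ^ b) p = 0 := by
  obtain ⟨r, rfl⟩ := minpoly.isIntegrallyClosed_dvd (h.isIntegral hq) hp
  rw [map_mul, h.minpoly_eq_pow_coprime hb, minpoly.aeval, zero_mul]

noncomputable def walshPoly {n q : ℕ} (g : (Fin n → ZMod 2) → ZMod q) (u : Fin n → ZMod 2) :
    ℤ[X] :=
  ∑ x, C ((-1) ^ (bdot u x).val) * X ^ (g x).val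

theorem aeval_zeta_pow_walshPoly {n q : ℕ} [NeZero q] (g : (Fin n → ZMod 2) → ZMod q)
    (u : Fin n → ZMod 2) (b : ℕ) :
    aeval (zeta q ^ b) (walshPoly g u) = gwht (fun x => (b : ZMod q) * g x) u := by
  simp only [walshPoly, gwht_eq_sum_zeta, map_sum, map_mul, aeval_C, aeval_X_pow, ← pow_mul]
  refine Finset.sum_congr rfl fun x _ => ?_
  rw [zeta_pow_val_eq (m := b * (g x).val) (by push_cast [ZMod.natCast_zmod_val]; rfl)]
  push_cast
  ring

theorem aeval_zeta_walshPoly {n q : ℕ} [NeZero q] (g : (Fin n → ZMod 2) → ZMod q)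
    (u : Fin n → ZMod 2) : aeval (zeta q) (walshPoly g u) = gwht g u := by
  simpa using aeval_zeta_pow_walshPoly g u 1

theorem IsGbent.natCast_mul {n q : ℕ} [NeZero q] {g : (Fin n → ZMod 2) → ZMod q}
    (hg : IsGbent g) {b : ℕ} (hb : b.Coprime q) : IsGbent fun x => (b : ZMod q) * g x := by
  rw [isGbent_iff_gwht_mul_gwht_neg] at hg ⊢
  intro u
  have hroot : aeval (zeta q) (walshPoly g u * walshPoly (fun x => -g x) u - 2 ^ n) = 0 := by
    simp [aeval_zeta_walshPoly, hg u, map_ofNat]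
  have := (isPrimitiveRoot_zeta (NeZero.ne q)).aeval_pow_eq_zero_of_coprime
    (Nat.pos_of_neZero q) hroot hb
  simpa [aeval_zeta_pow_walshPoly, sub_eq_zero, map_ofNat] using this

theorem gwht_natCast_mul_of_mul_eq {n d e q : ℕ} [NeZero q] (hq : d * e = q)
    (g : (Fin n → ZMod 2) → ZMod q) (u : Fin n → ZMod 2) :
    gwht (fun x => (d : ZMod q) * g x) u = gwht (fun x => ((g x).cast : ZMod e)) u := by
  have hqe : q ≠ 0 := NeZero.ne q
  have : NeZero e := ⟨right_ne_zero_of_mul (hq ▸ hqe)⟩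
  refine Finset.sum_congr rfl fun x _ => ?_
  rw [← zeta, ← zeta,
    zeta_pow_val_eq (m := d * (g x).val) (by push_cast [ZMod.natCast_zmod_val]; rfl), pow_mul,
    zeta_pow_of_mul_eq hq (left_ne_zero_of_mul (hq ▸ hqe)),
    zeta_pow_val_eq (ZMod.cast_eq_val (g x)).symm]

theorem isGbent_natCast_mul_iff {n d e q : ℕ} [NeZero q] (hq : d * e = q)
    (g : (Fin n → ZMod 2) → ZMod q) :
    IsGbent (fun x => (d : ZMod q) * g x) ↔ IsGbent (fun x => ((g x).cast : ZMod e)) := by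
  simp only [IsGbent, gwht_natCast_mul_of_mul_eq hq]

theorem coordExpand.cast {n k m : ℕ} {a : ℕ → BF n} {f : (Fin n → ZMod 2) → ZMod (2 ^ k)}
    (hf : coordExpand k a f) (hm : m ≤ k) :
    coordExpand m a (fun x => ((f x).cast : ZMod (2 ^ m))) := by
  intro x
  dsimp only
  rw [hf x, ← ZMod.castHom_apply (h := pow_dvd_pow 2 hm)]
  simp only [map_sum, map_mul, map_pow, map_ofNat, map_natCast]
  refine (Finset.sum_subset (Finset.range_subset_range.mpr hm) fun j _ hjm => ?_).symm
  have hj : m ≤ j := by simpa using hjm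
  have h2j : (2 : ZMod (2 ^ m)) ^ j = 0 := by
    exact_mod_cast (ZMod.natCast_eq_zero_iff _ _).mpr (pow_dvd_pow 2 hj)
  rw [h2j, zero_mul]

theorem exists_two_pow_mul_odd_of_ne_zero {k : ℕ} {c : ZMod (2 ^ k)} (hc : c ≠ 0) :
    ∃ t < k, ∃ b : ℕ, Odd b ∧ c = ((2 ^ t : ℕ) : ZMod (2 ^ k)) * b := by
  obtain ⟨t, b, hb, hcb⟩ := Nat.exists_eq_two_pow_mul_odd ((ZMod.val_ne_zero c).mpr hc)
  refine ⟨t, ?_, b, hb, by rw [← Nat.cast_mul, ← hcb, ZMod.natCast_zmod_val]⟩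
  have : 2 ^ t < 2 ^ k := lt_of_le_of_lt (hcb ▸ Nat.le_mul_of_pos_right _ hb.pos) c.val_lt
  exact (Nat.pow_lt_pow_iff_right (by norm_num)).mp this

theorem zqbent_iff_truncations_gbent_general (n k : ℕ) (a : ℕ → BF n)
    (f : (Fin n → ZMod 2) → ZMod (2 ^ k)) (hf : coordExpand k a f) :
    IsZqBent f ↔
      ∀ t < k, ∀ ft : (Fin n → ZMod 2) → ZMod (2 ^ (k - t)),
        coordExpand (k - t) a ft → IsGbent ft := by
  have hsplit : ∀ t ≤ k, 2 ^ t * 2 ^ (k - t) = 2 ^ k := fun t ht => by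
    rw [← pow_add, Nat.add_sub_cancel' ht]
  constructor
  · intro hZ t ht ft hft
    have hft_eq : ft = fun x => ((f x).cast : ZMod (2 ^ (k - t))) :=
      funext fun x => by rw [hft x, ← hf.cast (Nat.sub_le k t) x]
    have h2t : ((2 ^ t : ℕ) : ZMod (2 ^ k)) ≠ 0 := by
      rw [Ne, ZMod.natCast_eq_zero_iff, Nat.pow_dvd_pow_iff_le_right one_lt_two]
      omega
    rw [hft_eq, ← isGbent_natCast_mul_iff (hsplit t ht.le)]
    exact hZ _ h2t
  · intro hG c hc
    obtain ⟨t, ht, b, hb, rfl⟩ := exists_two_pow_mul_odd_of_ne_zero hc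
    have hdvd : 2 ^ (k - t) ∣ 2 ^ k := Dvd.intro_left _ (hsplit t ht.le)
    simp_rw [mul_assoc]
    rw [isGbent_natCast_mul_iff (hsplit t ht.le)]
    simp_rw [ZMod.cast_mul hdvd, ZMod.cast_natCast hdvd]
    exact (hG t ht _ (hf.cast (Nat.sub_le k t))).natCast_mul
      (Nat.Coprime.pow_right _ hb.coprime_two_right)

/-- Proposition 6: `f` is `ℤ_{2^k}`-bent iff each truncation
`f_t = a₀ + 2a₁ + ⋯ + 2^{k-t-1}a_{k-t-1} : 𝔽₂ⁿ → ℤ_{2^{k-t}}` is gbent. -/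
theorem zqbent_iff_truncations_gbent (n k : ℕ) (hn : Even n) (hk : 1 ≤ k) (a : ℕ → BF n)
    (f : (Fin n → ZMod 2) → ZMod (2 ^ k)) (hf : coordExpand k a f) :
    IsZqBent f ↔
      ∀ t < k, ∀ ft : (Fin n → ZMod 2) → ZMod (2 ^ (k - t)),
        coordExpand (k - t) a ft → IsGbent ft :=
  zqbent_iff_truncations_gbent_general n k a f hf
end
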